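/- Any two trivalent trees with n labeled leaves can be connected by a sequence of at most n·(n−3) elementary flips (a crude explicit bound witnessing connectedness of Fₙ). -/

import Mathlib

/-- A trivalent (binary) tree with `n` labeled leaves, encoded by its set of
splits: each internal edge determines a bipartition of the leaf set, and we
record the side not containing leaf `0`.  A maximal pairwise-compatible family
of `n - 3` nontrivial splits corresponds exactly to a trivalent leaf-labeled
tree. -/
structure TrivTree (n : ℕ) where
  splits : Finset (Finset (Fin n))
  zero_not_mem : ∀ A ∈ splits, ∀ a ∈ A, (a : ℕ) ≠ 0
  two_le_card : ∀ A ∈ splits, 2 ≤ A.card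
  card_le : ∀ A ∈ splits, A.card ≤ n - 2
  compat : ∀ A ∈ splits, ∀ B ∈ splits, A ⊆ B ∨ B ⊆ A ∨ Disjoint A B
  card_splits : splits.card = n - 3

/-- The flip graph `Fₙ`: two trivalent trees are adjacent iff they are related
by an elementary flip (NNI move), i.e. iff they are distinct and share all
but one split (the flipped internal edge). -/
def flipGraph (n : ℕ) : SimpleGraph (TrivTree n) where
  Adj t t' := t ≠ t' ∧ (t.splits ∩ t'.splits).card = n - 4
  symm := ⟨fun t t' h => ⟨Ne.symm h.1, by rw [Finset.inter_comm]; exact h.2⟩⟩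
  loopless := ⟨fun t h => h.1 rfl⟩

/-- `t` and `t'` differ by a single elementary flip. -/
def Flip {n : ℕ} (t t' : TrivTree n) : Prop := (flipGraph n).Adj t t'

/-!
Every tree is flipped to the caterpillar, whose splits are the segments `[1, k]`,
`2 ≤ k ≤ n - 2`, by putting the leaves `n - 1, n - 2, …, 3` into caterpillar position one at
a time. Once the leaves above `x` are in place, the splits containing `x` strictly inside
`[1, x]` form a chain of at most `x - 2` sets. Flipping the smallest of them lifts `x` one edge
and shortens the chain; when the chain is empty, the bound `m - 2` on the number of proper
members of size `≥ 2` of a laminar family on `m` points forces `[1, x - 1]` to be a split.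
This costs `∑_{x=3}^{n-1} (x - 2) = (n - 2)(n - 3) / 2` flips per tree, hence `n (n - 3)` for
two trees meeting at the caterpillar.
-/

open Finset

namespace Finset

variable {α : Type*}

def Nested (A B : Finset α) : Prop := A ⊆ B ∨ B ⊆ A ∨ Disjoint A B

def IsLaminar (F : Finset (Finset α)) : Prop := ∀ A ∈ F, ∀ B ∈ F, Nested A B

lemma Nested.symm {A B : Finset α} (h : Nested A B) : Nested B A := by
  rcases h with h | h | h
  exacts [Or.inr (Or.inl h), Or.inl h, Or.inr (Or.inr h.symm)]

lemma Nested.erase [DecidableEq α] {A B : Finset α} (h : Nested A B) (b : α) :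
    Nested (A.erase b) (B.erase b) := by
  rcases h with h | h | h
  exacts [Or.inl (erase_subset_erase b h), Or.inr (Or.inl (erase_subset_erase b h)),
    Or.inr (Or.inr (h.mono (erase_subset b A) (erase_subset b B)))]

lemma eq_of_erase_eq_of_mem_iff [DecidableEq α] {a b : α} {E F : Finset α} (hab : a ≠ b)
    (hE : b ∈ E ↔ a ∈ E) (hF : b ∈ F ↔ a ∈ F) (h : E.erase b = F.erase b) : E = F := by
  ext c
  have hc := congrArg (c ∈ ·) h
  have ha := congrArg (a ∈ ·) h
  simp only [mem_erase, ne_eq, eq_iff_iff] at hc ha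
  by_cases hcb : c = b
  · subst hcb
    rw [hE, hF]
    simpa [hab] using ha
  · simpa [hcb] using hc

namespace IsLaminar

variable {F : Finset (Finset α)}

lemma subset_of_mem_of_mem (hF : IsLaminar F) {A B : Finset α} (hA : A ∈ F) (hB : B ∈ F)
    {a : α} (haA : a ∈ A) (haB : a ∈ B) (hcard : A.card ≤ B.card) : A ⊆ B := by
  rcases hF A hA B hB with h | h | h
  · exact h
  · exact (eq_of_subset_of_card_le h hcard).ge
  · exact absurd haB (disjoint_left.1 h haA)

lemma subset (hF : IsLaminar F) {G : Finset (Finset α)} (hGF : G ⊆ F) : IsLaminar G :=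
  fun A hA B hB => hF A (hGF hA) B (hGF hB)

lemma image_erase [DecidableEq α] (hF : IsLaminar F) (b : α) :
    IsLaminar (F.image (·.erase b)) := by
  simp only [IsLaminar, mem_image]
  rintro _ ⟨E, hE, rfl⟩ _ ⟨E', hE', rfl⟩
  exact (hF E hE E' hE').erase b

lemma card_le_card_sub_two [DecidableEq α] (hF : IsLaminar F) {S : Finset α}
    (hsub : ∀ A ∈ F, A ⊆ S) (htwo : ∀ A ∈ F, 2 ≤ A.card) (hS : S ∉ F) :
    F.card ≤ S.card - 2 := by
  induction S using Finset.strongInduction generalizing F with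
  | H S ih =>
  rcases F.eq_empty_or_nonempty with rfl | hne
  · simp
  obtain ⟨A, hA, hAmin⟩ := exists_min_image F card hne
  obtain ⟨a, ha, b, hb, hab⟩ := one_lt_card.1 (htwo A hA)
  have hAS : A ⊂ S := ssubset_of_subset_of_ne (hsub A hA) (fun h => hS (h ▸ hA))
  have hA_le : ∀ {E}, E ∈ F → ∀ {c}, c ∈ A → c ∈ E → A ⊆ E :=
    fun hE _ hcA hcE => hF.subset_of_mem_of_mem hA hE hcA hcE (hAmin _ hE)
  -- The minimal member `A` lies in every member meeting it, so no member separates `a` from `b`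
  -- and erasing `b` loses no information.
  have hinj : Set.InjOn (fun E : Finset α => E.erase b) (insert S F : Finset (Finset α)) := by
    have hiff : ∀ E ∈ insert S F, b ∈ E ↔ a ∈ E := by
      simp only [mem_insert, forall_eq_or_imp]
      exact ⟨iff_of_true (hAS.subset hb) (hAS.subset ha),
        fun E hE => ⟨fun h => hA_le hE hb h ha, fun h => hA_le hE ha h hb⟩⟩
    exact fun E hE E' hE' => eq_of_erase_eq_of_mem_iff hab (hiff E hE) (hiff E' hE')
  have hF'two : ∀ A' ∈ (F.erase A).image (·.erase b), 2 ≤ A'.card := by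
    simp only [mem_image, mem_erase]
    rintro _ ⟨E, ⟨hEA, hE⟩, rfl⟩
    by_cases hbE : b ∈ E
    · have := card_lt_card (ssubset_of_subset_of_ne (hA_le hE hb hbE) (Ne.symm hEA))
      have := htwo A hA
      rw [card_erase_of_mem hbE]
      omega
    · rw [erase_eq_of_notMem hbE]
      exact htwo E hE
  have hF'S : S.erase b ∉ (F.erase A).image (·.erase b) := by
    simp only [mem_image, mem_erase]
    rintro ⟨E, ⟨-, hE⟩, hES⟩
    exact hS (hinj (mem_insert_of_mem hE) (mem_insert_self S F) hES ▸ hE)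
  have hF'sub : ∀ A' ∈ (F.erase A).image (·.erase b), A' ⊆ S.erase b := by
    simp only [mem_image, mem_erase]
    rintro _ ⟨E, ⟨-, hE⟩, rfl⟩
    exact erase_subset_erase b (hsub E hE)
  have hrec := ih (S.erase b) (erase_ssubset (hAS.subset hb))
    ((hF.subset (erase_subset A F)).image_erase b) hF'sub hF'two hF'S
  rw [card_image_of_injOn (hinj.mono (coe_subset.2 ((erase_subset A F).trans (subset_insert S F)))),
    card_erase_of_mem hA, card_erase_of_mem (hAS.subset hb)] at hrec
  have := card_lt_card hAS
  have := htwo A hA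
  have := card_pos.2 hne
  omega

lemma exists_min_ssuperset [DecidableEq α] (hF : IsLaminar F) {D : Finset α} (hD : D.Nonempty)
    (hsup : ∃ E ∈ F, D ⊂ E) : ∃ Q ∈ F, D ⊂ Q ∧ ∀ E ∈ F, D ⊂ E → Q ⊆ E := by
  obtain ⟨d, hd⟩ := hD
  have hne : (F.filter (D ⊂ ·)).Nonempty := by simpa [Finset.Nonempty] using hsup
  obtain ⟨Q, hQ, hQmin⟩ := exists_min_image _ card hne
  rw [mem_filter] at hQ
  refine ⟨Q, hQ.1, hQ.2, fun E hE hDE => ?_⟩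
  exact hF.subset_of_mem_of_mem hQ.1 hE (hQ.2.subset hd) (hDE.subset hd)
    (hQmin E (mem_filter.2 ⟨hE, hDE⟩))

lemma nested_erase [DecidableEq α] (hF : IsLaminar F) {D Q : Finset α} {x : α} (hxD : x ∈ D)
    (hQ : Q ∈ F) (hDQ : D ⊆ Q) (hQmin : ∀ E ∈ F, D ⊂ E → Q ⊆ E)
    (hDmin : ∀ E ∈ F, x ∈ E → D ⊆ E)
    {E : Finset α} (hE : E ∈ F) (hED : E ≠ D) : Nested (Q.erase x) E := by
  by_cases hxE : x ∈ E
  · exact Or.inl ((erase_subset x Q).trans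
      (hQmin E hE (ssubset_of_subset_of_ne (hDmin E hE hxE) hED.symm)))
  rcases hF Q hQ E hE with h | h | h
  · exact absurd (h (hDQ hxD)) hxE
  · exact Or.inr (Or.inl fun e he => mem_erase.2 ⟨fun h => hxE (h ▸ he), h he⟩)
  · exact Or.inr (Or.inr (h.mono_left (erase_subset x Q)))

end IsLaminar

lemma not_nested_erase [DecidableEq α] {D Q : Finset α} {x : α} (hDQ : D ⊂ Q) (hxD : x ∈ D)
    (hD : 2 ≤ D.card) : ¬Nested (Q.erase x) D := by
  obtain ⟨w, hwQ, hwD⟩ := exists_of_ssubset hDQ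
  obtain ⟨d, hdD, hdx⟩ := exists_mem_ne hD x
  rintro (h | h | h)
  · exact hwD (h (mem_erase.2 ⟨fun h => hwD (h ▸ hxD), hwQ⟩))
  · exact notMem_erase x Q (h hxD)
  · exact disjoint_left.1 h (mem_erase.2 ⟨hdx, hDQ.subset hdD⟩) hdD

end Finset

lemma SimpleGraph.exists_walk_of_forall_exists_adj_lt {V : Type*} (G : SimpleGraph V)
    (P : V → Prop) (μ : V → ℕ)
    (hstep : ∀ v, P v → μ v ≠ 0 → ∃ w, G.Adj v w ∧ P w ∧ μ w < μ v)
    (v : V) (hv : P v) : ∃ w, P w ∧ μ w = 0 ∧ ∃ p : G.Walk v w, p.length ≤ μ v := by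
  induction hk : μ v using Nat.strong_induction_on generalizing v with
  | _ k ih =>
  by_cases h0 : μ v = 0
  · exact ⟨v, hv, h0, .nil, by simp⟩
  obtain ⟨w, hvw, hw, hlt⟩ := hstep v hv h0
  obtain ⟨u, hu, hu0, p, hp⟩ := ih (μ w) (hk ▸ hlt) w hw rfl
  exact ⟨u, hu, hu0, .cons hvw p, by rw [SimpleGraph.Walk.length_cons]; omega⟩

def initSeg (n k : ℕ) : Finset (Fin n) := univ.filter fun a => 1 ≤ (a : ℕ) ∧ (a : ℕ) ≤ k

section initSeg

variable {n k l : ℕ}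

@[simp]
lemma mem_initSeg {a : Fin n} : a ∈ initSeg n k ↔ 1 ≤ (a : ℕ) ∧ (a : ℕ) ≤ k := by
  simp [initSeg]

lemma card_initSeg (hk : k < n) : (initSeg n k).card = k := by
  have : (initSeg n k).map Fin.valEmbedding = Icc 1 k := by
    ext m
    simp only [mem_map, mem_initSeg, Fin.valEmbedding_apply, mem_Icc]
    exact ⟨fun ⟨a, ha, hm⟩ => hm ▸ ha, fun hm => ⟨⟨m, by omega⟩, hm, rfl⟩⟩
  rw [← card_map Fin.valEmbedding, this, Nat.card_Icc]
  omega

lemma initSeg_mono (h : k ≤ l) : initSeg n k ⊆ initSeg n l := by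
  intro a
  simp only [mem_initSeg]
  omega

lemma erase_initSeg (x : Fin n) : (initSeg n x).erase x = initSeg n (x - 1) := by
  ext a
  simp only [mem_erase, mem_initSeg, ne_eq, ← Fin.val_inj]
  omega

lemma zero_notMem_of_subset_initSeg {E : Finset (Fin n)} (hE : E ⊆ initSeg n k) :
    ∀ a ∈ E, (a : ℕ) ≠ 0 := fun a ha => by
  have := mem_initSeg.1 (hE ha)
  omega

end initSeg

def caterpillarSplits (n x : ℕ) : Finset (Finset (Fin n)) := (Icc x (n - 2)).image (initSeg n)

section caterpillarSplits

variable {n x : ℕ}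

lemma initSeg_subset_of_mem_caterpillarSplits {C : Finset (Fin n)}
    (hC : C ∈ caterpillarSplits n x) : initSeg n x ⊆ C := by
  obtain ⟨k, hk, rfl⟩ := mem_image.1 hC
  exact initSeg_mono (mem_Icc.1 hk).1

lemma caterpillarSplits_anti {y : ℕ} (h : x ≤ y) :
    caterpillarSplits n y ⊆ caterpillarSplits n x :=
  image_subset_image fun k hk => by
    rw [mem_Icc] at hk ⊢
    omega

lemma card_caterpillarSplits_le (hx : 1 ≤ x) : (caterpillarSplits n x).card ≤ n - 1 - x := by
  have := (card_image_le (s := Icc x (n - 2)) (f := initSeg n))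
  rw [Nat.card_Icc] at this
  unfold caterpillarSplits
  omega

end caterpillarSplits

namespace TrivTree

variable {n : ℕ}

lemma ext {t t' : TrivTree n} (h : t.splits = t'.splits) : t = t' := by
  cases t
  cases t'
  simp_all

lemma isLaminar (t : TrivTree n) : IsLaminar t.splits := t.compat

lemma subset_initSeg (t : TrivTree n) {E : Finset (Fin n)} (hE : E ∈ t.splits) :
    E ⊆ initSeg n (n - 1) := fun a ha => by
  have := t.zero_not_mem E hE a ha
  have := a.isLt
  rw [mem_initSeg]
  omega

lemma exists_flip_of_exchange (t : TrivTree n) {D B : Finset (Fin n)} (hD : D ∈ t.splits)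
    (hB : B ∉ t.splits) (hB0 : ∀ a ∈ B, (a : ℕ) ≠ 0) (hB2 : 2 ≤ B.card)
    (hBn : B.card ≤ n - 2) (hBnested : ∀ E ∈ t.splits, E ≠ D → Nested B E) :
    ∃ t', Flip t t' ∧ t'.splits = insert B (t.splits.erase D) := by
  have hmem : ∀ E ∈ insert B (t.splits.erase D), E = B ∨ E ∈ t.splits ∧ E ≠ D := by
    simp only [mem_insert, mem_erase]
    tauto
  have hlam : IsLaminar (insert B (t.splits.erase D)) := by
    intro A hA E hE
    rcases hmem A hA with rfl | ⟨hAt, hAD⟩ <;> rcases hmem E hE with rfl | ⟨hEt, hED⟩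
    · exact Or.inl subset_rfl
    · exact hBnested E hEt hED
    · exact (hBnested A hAt hAD).symm
    · exact t.isLaminar A hAt E hEt
  let t' : TrivTree n :=
    { splits := insert B (t.splits.erase D)
      zero_not_mem := fun E hE => by
        rcases hmem E hE with rfl | ⟨hE, -⟩
        exacts [hB0, t.zero_not_mem E hE]
      two_le_card := fun E hE => by
        rcases hmem E hE with rfl | ⟨hE, -⟩
        exacts [hB2, t.two_le_card E hE]
      card_le := fun E hE => by
        rcases hmem E hE with rfl | ⟨hE, -⟩
        exacts [hBn, t.card_le E hE]
      compat := hlam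
      card_splits := by
        rw [card_insert_of_notMem (fun h => hB (mem_of_mem_erase h)), card_erase_of_mem hD,
          t.card_splits]
        omega }
  have hinter : t.splits ∩ t'.splits = t.splits.erase D := by
    ext E
    simp only [t', mem_inter, mem_insert, mem_erase]
    constructor
    · rintro ⟨hE, rfl | h⟩
      exacts [absurd hE hB, h]
    · exact fun h => ⟨h.2, Or.inr h⟩
  refine ⟨t', ⟨fun h => hB (h ▸ mem_insert_self B _), ?_⟩, rfl⟩
  rw [hinter, card_erase_of_mem hD, t.card_splits]
  omega

def IsCaterpillarAbove (t : TrivTree n) (x : ℕ) : Prop :=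
  caterpillarSplits n x ⊆ t.splits ∧
    ∀ E ∈ t.splits, E ⊆ initSeg n x ∨ E ∈ caterpillarSplits n x

lemma isCaterpillarAbove_of_lt (t : TrivTree n) {x : ℕ} (hx : n - 2 < x) :
    t.IsCaterpillarAbove x := by
  have hempty : caterpillarSplits n x = ∅ := by
    rw [caterpillarSplits, image_eq_empty, Icc_eq_empty]
    omega
  rw [IsCaterpillarAbove, hempty]
  exact ⟨empty_subset _,
    fun E hE => Or.inl ((t.subset_initSeg hE).trans (initSeg_mono (by omega)))⟩

lemma IsCaterpillarAbove.splits_eq {t : TrivTree n} (ht : t.IsCaterpillarAbove 2) :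
    t.splits = caterpillarSplits n 2 := by
  refine eq_of_subset_of_card_le (fun E hE => ?_) ?_
  · rcases ht.2 E hE with hE2 | hE2
    · have h2 := t.two_le_card E hE
      have hn := t.card_le E hE
      have : E = initSeg n 2 :=
        eq_of_subset_of_card_le hE2 (by rwa [card_initSeg (by omega)])
      exact this ▸ mem_image.2 ⟨2, mem_Icc.2 ⟨le_rfl, by omega⟩, rfl⟩
    · exact hE2
  · have := card_caterpillarSplits_le (n := n) one_le_two
    rw [t.card_splits]
    omega

lemma IsCaterpillarAbove.isLaminar_insert {t : TrivTree n} {x : ℕ} (ht : t.IsCaterpillarAbove x) :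
    IsLaminar (insert (initSeg n x) t.splits) := by
  have hI : ∀ E ∈ t.splits, Nested (initSeg n x) E := fun E hE =>
    (ht.2 E hE).elim (fun h => Or.inr (Or.inl h))
      (fun h => Or.inl (initSeg_subset_of_mem_caterpillarSplits h))
  intro A hA E hE
  rcases mem_insert.1 hA with rfl | hAt <;> rcases mem_insert.1 hE with rfl | hEt
  · exact Or.inl subset_rfl
  · exact hI E hEt
  · exact (hI A hAt).symm
  · exact t.isLaminar A hAt E hEt

def innerSplits (t : TrivTree n) (x : Fin n) : Finset (Finset (Fin n)) :=
  t.splits.filter fun E => x ∈ E ∧ E ⊂ initSeg n x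

lemma mem_innerSplits {t : TrivTree n} {x : Fin n} {E : Finset (Fin n)} :
    E ∈ t.innerSplits x ↔ E ∈ t.splits ∧ x ∈ E ∧ E ⊂ initSeg n x :=
  mem_filter

-- Members of `innerSplits` are nested, hence determined by their sizes, which lie in `[2, x - 1]`.
lemma card_innerSplits_le (t : TrivTree n) (x : Fin n) : (t.innerSplits x).card ≤ x - 2 := by
  have hinj : Set.InjOn card (t.innerSplits x : Set (Finset (Fin n))) := by
    intro A hA B hB hAB
    obtain ⟨hAt, hxA, -⟩ := mem_innerSplits.1 hA
    obtain ⟨hBt, hxB, -⟩ := mem_innerSplits.1 hB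
    exact eq_of_subset_of_card_le (t.isLaminar.subset_of_mem_of_mem hAt hBt hxA hxB hAB.le) hAB.ge
  have hsizes : (t.innerSplits x).image card ⊆ Icc 2 (x - 1) := by
    intro c hc
    obtain ⟨E, hE, rfl⟩ := mem_image.1 hc
    obtain ⟨hEt, -, hEI⟩ := mem_innerSplits.1 hE
    have := card_lt_card hEI
    rw [card_initSeg x.isLt] at this
    have := t.two_le_card E hEt
    rw [mem_Icc]
    omega
  have := card_le_card hsizes
  rw [card_image_of_injOn hinj, Nat.card_Icc] at this
  omega

/-- Let `D` be the smallest split containing `x` and `Q` the next larger set of the laminar family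
`t.splits ∪ {[1, x]}`; the flip replaces `D` by `Q \ {x}`, moving the leaf `x` one edge up. -/
lemma IsCaterpillarAbove.exists_flip {t : TrivTree n} {x : Fin n} (ht : t.IsCaterpillarAbove x)
    (hne : (t.innerSplits x).Nonempty) :
    ∃ t', Flip t t' ∧ t'.IsCaterpillarAbove x ∧
      (t'.innerSplits x).card < (t.innerSplits x).card := by
  set I := initSeg n x
  set F := insert I t.splits
  have hF : IsLaminar F := ht.isLaminar_insert
  obtain ⟨D, hD, hDmin⟩ := exists_min_image (t.innerSplits x) card hne
  obtain ⟨hDt, hxD, hDI⟩ := mem_innerSplits.1 hD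
  have hD2 := t.two_le_card D hDt
  have hDle : ∀ E ∈ F, x ∈ E → D ⊆ E := by
    intro E hE hxE
    by_contra hDE
    have hED : E ⊆ D := (hF D (mem_insert_of_mem hDt) E hE).resolve_left hDE |>.resolve_right
      fun h => disjoint_left.1 h hxD hxE
    have hEinner : E ∈ t.innerSplits x := by
      refine mem_innerSplits.2 ⟨?_, hxE, hED.trans_ssubset hDI⟩
      exact (mem_insert.1 hE).resolve_left fun h => hDI.not_subset (show I ⊆ D from h ▸ hED)
    exact hDE (eq_of_subset_of_card_le hED (hDmin E hEinner)).ge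
  obtain ⟨Q, hQ, hDQ, hQmin⟩ :=
    hF.exists_min_ssuperset ⟨x, hxD⟩ ⟨I, mem_insert_self I _, hDI⟩
  have hQI : Q ⊆ I := hQmin I (mem_insert_self I _) hDI
  have hBI : Q.erase x ⊆ I := (erase_subset x Q).trans hQI
  have hBt : Q.erase x ∉ t.splits := fun h =>
    not_nested_erase hDQ hxD hD2 (t.isLaminar _ h D hDt)
  have hcardQ : Q.card ≤ x := card_initSeg x.isLt ▸ card_le_card hQI
  have hcardB := card_erase_of_mem (hDQ.subset hxD)
  have := card_lt_card hDQ
  obtain ⟨t', hflip, ht'⟩ := t.exists_flip_of_exchange hDt hBt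
    (zero_notMem_of_subset_initSeg hBI) (by omega) (by omega)
    (fun E hE hED => hF.nested_erase hxD hQ hDQ.subset hQmin hDle (mem_insert_of_mem hE) hED)
  have hDcat : D ∉ caterpillarSplits n x := fun h =>
    hDI.not_subset (initSeg_subset_of_mem_caterpillarSplits h)
  refine ⟨t', hflip, ⟨fun C hC => ?_, fun E hE => ?_⟩, ?_⟩
  · rw [ht']
    exact mem_insert_of_mem (mem_erase.2 ⟨fun h => hDcat (h ▸ hC), ht.1 hC⟩)
  · rw [ht', mem_insert] at hE
    rcases hE with rfl | hE
    exacts [Or.inl hBI, ht.2 E (mem_of_mem_erase hE)]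
  · have : t'.innerSplits x = (t.innerSplits x).erase D := by
      rw [innerSplits, ht', filter_insert, if_neg fun h => notMem_erase x Q h.1, filter_erase]
      rfl
    rw [this]
    exact card_erase_lt_of_mem hD

lemma IsCaterpillarAbove.pred {t : TrivTree n} {x : Fin n} (hx : 3 ≤ (x : ℕ))
    (ht : t.IsCaterpillarAbove x) (h0 : t.innerSplits x = ∅) : t.IsCaterpillarAbove (x - 1) := by
  have hsplit : ∀ E ∈ t.splits, E ⊆ initSeg n (x - 1) ∨ E ∈ caterpillarSplits n x := by
    intro E hE
    refine (ht.2 E hE).elim (fun hEI => ?_) Or.inr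
    by_cases hxE : x ∈ E
    · have hEI : E = initSeg n x := by
        by_contra hne
        have : E ∈ t.innerSplits x :=
          mem_innerSplits.2 ⟨hE, hxE, ssubset_of_subset_of_ne hEI hne⟩
        simp [h0] at this
      have := t.card_le E hE
      rw [hEI, card_initSeg x.isLt] at this
      exact Or.inr (hEI ▸ mem_image.2 ⟨x, mem_Icc.2 ⟨le_rfl, this⟩, rfl⟩)
    · rw [← erase_initSeg]
      exact Or.inl fun a ha => mem_erase.2 ⟨fun h => hxE (h ▸ ha), hEI ha⟩
  -- Otherwise the splits inside `[1, x - 1]` would form a laminar family of `x - 2` sets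
  -- not containing `[1, x - 1]`, one too many.
  have hmem : initSeg n (x - 1) ∈ t.splits := by
    by_contra hnot
    set G := t.splits.filter (· ⊆ initSeg n (x - 1))
    have hG : G.card ≤ (initSeg n (x - 1)).card - 2 :=
      (t.isLaminar.subset (filter_subset _ _)).card_le_card_sub_two
        (fun A hA => (mem_filter.1 hA).2) (fun A hA => t.two_le_card A (mem_filter.1 hA).1)
        (fun h => hnot (mem_filter.1 h).1)
    rw [card_initSeg (by omega)] at hG
    have hcover : t.splits ⊆ G ∪ caterpillarSplits n x := fun E hE =>
      (hsplit E hE).elim (fun h => mem_union_left _ (mem_filter.2 ⟨hE, h⟩)) (mem_union_right _)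
    have := (card_le_card hcover).trans (card_union_le _ _)
    have := card_caterpillarSplits_le (n := n) (x := x) (by omega)
    rw [t.card_splits] at *
    omega
  refine ⟨fun C hC => ?_, fun E hE =>
    (hsplit E hE).imp_right fun h => caterpillarSplits_anti (Nat.sub_le _ _) h⟩
  obtain ⟨k, hk, rfl⟩ := mem_image.1 hC
  rw [mem_Icc] at hk
  rcases eq_or_lt_of_le hk.1 with hk' | hk'
  · exact hk' ▸ hmem
  · exact ht.1 (mem_image.2 ⟨k, mem_Icc.2 ⟨by omega, hk.2⟩, rfl⟩)

lemma IsCaterpillarAbove.exists_walk_pred {t : TrivTree n} {x : Fin n} (hx : 3 ≤ (x : ℕ))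
    (ht : t.IsCaterpillarAbove x) :
    ∃ t', t'.IsCaterpillarAbove (x - 1) ∧
      ∃ p : (flipGraph n).Walk t t', p.length ≤ x - 2 := by
  obtain ⟨t', ht', h0, p, hp⟩ := (flipGraph n).exists_walk_of_forall_exists_adj_lt
    (IsCaterpillarAbove · x) (fun t => (t.innerSplits x).card)
    (fun _ ht h0 => ht.exists_flip (card_ne_zero.1 h0)) t ht
  exact ⟨t', ht'.pred hx (card_eq_zero.1 h0), p, hp.trans (t.card_innerSplits_le x)⟩

lemma IsCaterpillarAbove.exists_walk_two {k : ℕ} {t : TrivTree n} (hk : k + 2 < n)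
    (ht : t.IsCaterpillarAbove (k + 2)) :
    ∃ c : TrivTree n, c.IsCaterpillarAbove 2 ∧
      ∃ p : (flipGraph n).Walk t c, 2 * p.length ≤ k * (k + 1) := by
  induction k generalizing t with
  | zero => exact ⟨t, ht, .nil, by simp⟩
  | succ k ih =>
    obtain ⟨t₁, ht₁, p₁, hp₁⟩ := exists_walk_pred (x := ⟨k + 3, hk⟩) (by simp) ht
    obtain ⟨c, hc, p₂, hp₂⟩ := ih (by omega) ht₁
    refine ⟨c, hc, p₁.append p₂, ?_⟩
    rw [SimpleGraph.Walk.length_append]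
    have hp₁ : p₁.length ≤ k + 1 := hp₁
    nlinarith

end TrivTree

/-- Any two trivalent trees with `n` labeled leaves are connected by a
sequence of at most `n·(n-3)` elementary flips. -/
theorem flip_distance_bound :
    ∀ n : ℕ, 4 ≤ n → ∀ t t' : TrivTree n,
      ∃ p : (flipGraph n).Walk t t', p.length ≤ n * (n - 3) := by
  intro n hn t t'
  have htop : n - 3 + 2 < n ∧ n - 2 < n - 3 + 2 := by omega
  obtain ⟨c, hc, p, hp⟩ := (t.isCaterpillarAbove_of_lt htop.2).exists_walk_two htop.1
  obtain ⟨c', hc', p', hp'⟩ := (t'.isCaterpillarAbove_of_lt htop.2).exists_walk_two htop.1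
  obtain rfl : c = c' := TrivTree.ext (hc.splits_eq.trans hc'.splits_eq.symm)
  refine ⟨p.append p'.reverse, ?_⟩
  rw [SimpleGraph.Walk.length_append, SimpleGraph.Walk.length_reverse]
  have : (n - 3) * (n - 3 + 1) ≤ n * (n - 3) := by
    rw [mul_comm n]
    exact Nat.mul_le_mul_left _ (by omega)
  omega
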